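/- Let ψ1 and ψ2 be modal μ-calculus formulas such that ψ1∧ψ2 is in normal form, let κ : P → Set S be a valuation and s : S a state. Then Player 0 wins the model-checking parity game G(ψ1∧ψ2) from the vertex (ψ1∧ψ2, s) if and only if Player 0 wins G(ψ1) from (ψ1, s) and Player 0 wins G(ψ2) from (ψ2, s). -/

import Mathlib

/-- Formulas of the modal μ-calculus over a type `P` of propositional variables:
`⊥ | ⊤ | p | ¬p | φ∧φ | φ∨φ | □φ | ◇φ | μp.φ | νp.φ`. -/
inductive MuForm (P : Type*) where
  | bot : MuForm P
  | top : MuForm P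
  | var (p : P) : MuForm P
  | nvar (p : P) : MuForm P
  | and (φ ψ : MuForm P) : MuForm P
  | or (φ ψ : MuForm P) : MuForm P
  | box (φ : MuForm P) : MuForm P
  | dia (φ : MuForm P) : MuForm P
  | mu (p : P) (φ : MuForm P) : MuForm P
  | nu (p : P) (φ : MuForm P) : MuForm P
  deriving DecidableEq

variable {P S : Type*}

/-- The set of free variables of a μ-calculus formula (`μp`/`νp` bind `p`). -/
def MuForm.freeVars : MuForm P → Set P
  | .bot => ∅
  | .top => ∅
  | .var p => {p}
  | .nvar p => {p}
  | .and φ ψ => φ.freeVars ∪ ψ.freeVars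
  | .or φ ψ => φ.freeVars ∪ ψ.freeVars
  | .box φ => φ.freeVars
  | .dia φ => φ.freeVars
  | .mu p φ => φ.freeVars \ {p}
  | .nu p φ => φ.freeVars \ {p}

/-- `p` occurs only positively in a μ-calculus formula. -/
def MuForm.PositiveIn (p : P) : MuForm P → Prop
  | .bot => True
  | .top => True
  | .var _ => True
  | .nvar q => q ≠ p
  | .and φ ψ => φ.PositiveIn p ∧ ψ.PositiveIn p
  | .or φ ψ => φ.PositiveIn p ∧ ψ.PositiveIn p
  | .box φ => φ.PositiveIn p
  | .dia φ => φ.PositiveIn p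
  | .mu q φ => q = p ∨ φ.PositiveIn p
  | .nu q φ => q = p ∨ φ.PositiveIn p

/-- Semantics `⟦φ⟧κ ⊆ S` of a μ-calculus formula in the Kripke structure with
state type `S`, transition relation `R`, and valuation `κ : P → Set S`. -/
def MuForm.sem [DecidableEq P] (R : S → S → Prop) : MuForm P → (P → Set S) → Set S
  | .bot, _ => ∅
  | .top, _ => Set.univ
  | .var p, κ => κ p
  | .nvar p, κ => (κ p)ᶜ
  | .and φ ψ, κ => φ.sem R κ ∩ ψ.sem R κ
  | .or φ ψ, κ => φ.sem R κ ∪ ψ.sem R κ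
  | .box φ, κ => {s | ∀ s', R s s' → s' ∈ φ.sem R κ}
  | .dia φ, κ => {s | ∃ s', R s s' ∧ s' ∈ φ.sem R κ}
  | .mu p φ, κ => ⋂₀ {X : Set S | φ.sem R (Function.update κ p X) ⊆ X}
  | .nu p φ, κ => ⋃₀ {X : Set S | X ⊆ φ.sem R (Function.update κ p X)}
variable [DecidableEq P]

/-- The finite set of subformulas of a μ-calculus formula. -/
def MuForm.subformulas : MuForm P → Finset (MuForm P)
  | .bot => {.bot}
  | .top => {.top}
  | .var p => {.var p}
  | .nvar p => {.nvar p}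
  | .and φ ψ => insert (.and φ ψ) (φ.subformulas ∪ ψ.subformulas)
  | .or φ ψ => insert (.or φ ψ) (φ.subformulas ∪ ψ.subformulas)
  | .box φ => insert (.box φ) φ.subformulas
  | .dia φ => insert (.dia φ) φ.subformulas
  | .mu p φ => insert (.mu p φ) φ.subformulas
  | .nu p φ => insert (.nu p φ) φ.subformulas

/-- Size of a formula (used as a termination measure). -/
def MuForm.fsize : MuForm P → ℕ
  | .bot => 1
  | .top => 1
  | .var _ => 1
  | .nvar _ => 1
  | .and φ ψ => φ.fsize + ψ.fsize + 1
  | .or φ ψ => φ.fsize + ψ.fsize + 1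
  | .box φ => φ.fsize + 1
  | .dia φ => φ.fsize + 1
  | .mu _ φ => φ.fsize + 1
  | .nu _ φ => φ.fsize + 1

theorem MuForm.fsize_le_of_mem_subformulas :
    ∀ {φ ψ : MuForm P}, ψ ∈ φ.subformulas → ψ.fsize ≤ φ.fsize := by
  intro φ
  induction φ with
  | bot => intro ψ h; simp [MuForm.subformulas] at h; subst h; exact le_refl _
  | top => intro ψ h; simp [MuForm.subformulas] at h; subst h; exact le_refl _
  | var p => intro ψ h; simp [MuForm.subformulas] at h; subst h; exact le_refl _
  | nvar p => intro ψ h; simp [MuForm.subformulas] at h; subst h; exact le_refl _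
  | and φ₁ φ₂ ih₁ ih₂ =>
      intro ψ h; simp [MuForm.subformulas] at h
      rcases h with h | h | h
      · subst h; exact le_refl _
      · exact le_trans (ih₁ h) (by simp [MuForm.fsize]; omega)
      · exact le_trans (ih₂ h) (by simp [MuForm.fsize]; omega)
  | or φ₁ φ₂ ih₁ ih₂ =>
      intro ψ h; simp [MuForm.subformulas] at h
      rcases h with h | h | h
      · subst h; exact le_refl _
      · exact le_trans (ih₁ h) (by simp [MuForm.fsize]; omega)
      · exact le_trans (ih₂ h) (by simp [MuForm.fsize]; omega)
  | box φ ih =>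
      intro ψ h; simp [MuForm.subformulas] at h
      rcases h with h | h
      · subst h; exact le_refl _
      · exact le_trans (ih h) (by simp [MuForm.fsize])
  | dia φ ih =>
      intro ψ h; simp [MuForm.subformulas] at h
      rcases h with h | h
      · subst h; exact le_refl _
      · exact le_trans (ih h) (by simp [MuForm.fsize])
  | mu p φ ih =>
      intro ψ h; simp [MuForm.subformulas] at h
      rcases h with h | h
      · subst h; exact le_refl _
      · exact le_trans (ih h) (by simp [MuForm.fsize])
  | nu p φ ih =>
      intro ψ h; simp [MuForm.subformulas] at h
      rcases h with h | h
      · subst h; exact le_refl _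
      · exact le_trans (ih h) (by simp [MuForm.fsize])

open Classical in
/-- The alternation depth `α(φ)` of a μ-calculus formula.  For `μp.ψ` it is the
maximum of `{1, α(ψ)}` together with all values `α(νp'.ψ') + 1` for ν-subformulas
`νp'.ψ'` of `ψ` in which `p` occurs free, and dually for `νp.ψ`. -/
noncomputable def MuForm.alt : MuForm P → ℕ
  | .bot => 0
  | .top => 0
  | .var _ => 0
  | .nvar _ => 0
  | .and φ ψ => max φ.alt ψ.alt
  | .or φ ψ => max φ.alt ψ.alt
  | .box φ => φ.alt
  | .dia φ => φ.alt
  | .mu p φ => max (max 1 φ.alt)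
      (φ.subformulas.attach.sup fun ψ =>
        if (∃ p' ψ', ψ.1 = MuForm.nu p' ψ') ∧ p ∈ ψ.1.freeVars then ψ.1.alt + 1 else 0)
  | .nu p φ => max (max 1 φ.alt)
      (φ.subformulas.attach.sup fun ψ =>
        if (∃ p' ψ', ψ.1 = MuForm.mu p' ψ') ∧ p ∈ ψ.1.freeVars then ψ.1.alt + 1 else 0)
termination_by φ => φ.fsize
decreasing_by
  all_goals simp [MuForm.fsize]
  all_goals try omega
  all_goals
    have := MuForm.fsize_le_of_mem_subformulas ψ.2
    omega

/-- A parity game: vertices `V`, each owned by Player `0` or Player `1`,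
an edge relation `E`, and a priority function `prio` with finite range. -/
structure ParityGame (V : Type*) where
  owner : V → Fin 2
  E : V → V → Prop
  prio : V → ℕ
  finRange : (Set.range prio).Finite

namespace ParityGame

variable {V : Type*} (G : ParityGame V)

/-- A dead end: a vertex without `E`-successor. -/
def DeadEnd (v : V) : Prop := ∀ w, ¬ G.E v w

/-- `π : ℕ → V` is an infinite play (all consecutive steps are edges). -/
def InfPlay (π : ℕ → V) : Prop := ∀ i, G.E (π i) (π (i + 1))

/-- The set of priorities occurring infinitely often along an infinite play. -/
def InfOften (π : ℕ → V) : Set ℕ := {c | ∀ N, ∃ n, N ≤ n ∧ G.prio (π n) = c}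

/-- An infinite play is won by Player `0` iff the maximum priority occurring
infinitely often is even (max-parity condition). -/
def WinInf (π : ℕ → V) : Prop := Even (sSup (G.InfOften π))

/-- `l` is a finite play from `v`: a nonempty list starting at `v`, with
consecutive `E`-edges, whose last vertex is a dead end. -/
def FinPlay (v : V) (l : List V) : Prop :=
  l.head? = some v ∧ l.Chain' G.E ∧ ∀ x ∈ l.getLast?, G.DeadEnd x

/-- A finite play is won by Player `0` iff its last vertex belongs to Player `1`. -/
def WinFin (l : List V) : Prop := ∀ x ∈ l.getLast?, G.owner x = 1

/-- A strategy (for Player `0`) is valid if it assigns to every finite nonempty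
`E`-path ending in a Player-`0` vertex that is not a dead end an `E`-successor
of that vertex. -/
def ValidStrat (σ : List V → V) : Prop :=
  ∀ (l : List V) (x : V), l.Chain' G.E → l.getLast? = some x →
    G.owner x = 0 → ¬ G.DeadEnd x → G.E x (σ l)

/-- An infinite play conforms to a strategy `σ` if every step taken from a
Player-`0` vertex follows `σ` applied to the path traversed so far. -/
def ConformsInf (σ : List V → V) (π : ℕ → V) : Prop :=
  ∀ i, G.owner (π i) = 0 → π (i + 1) = σ (List.ofFn fun j : Fin (i + 1) => π j)

/-- A finite play conforms to a strategy `σ` if every step taken from a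
Player-`0` vertex follows `σ` applied to the path traversed so far. -/
def ConformsFin (σ : List V → V) (l : List V) : Prop :=
  ∀ (i : ℕ) (h : i + 1 < l.length),
    G.owner (l.get ⟨i, Nat.lt_of_succ_lt h⟩) = 0 →
    l.get ⟨i + 1, h⟩ = σ (l.take (i + 1))

/-- `σ` is a winning strategy for Player `0` from `v`: it is a valid strategy
and every (infinite or finite) play from `v` conforming to it is won by
Player `0`. -/
def WinningFrom (σ : List V → V) (v : V) : Prop :=
  G.ValidStrat σ ∧
    (∀ π : ℕ → V, π 0 = v → G.InfPlay π → G.ConformsInf σ π → G.WinInf π) ∧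
    (∀ l : List V, G.FinPlay v l → G.ConformsFin σ l → G.WinFin l)

/-- Player `0` wins the game from `v` if some strategy is winning for
Player `0` from `v`. -/
def Wins0 (v : V) : Prop := ∃ σ : List V → V, G.WinningFrom σ v

/-- A strategy is memoryless if its value depends only on the last vertex of
the path. -/
def Memoryless (σ : List V → V) : Prop :=
  ∀ (l l' : List V) (x : V), l.getLast? = some x → l'.getLast? = some x → σ l = σ l'

end ParityGame

theorem MuForm.self_mem_subformulas (φ : MuForm P) : φ ∈ φ.subformulas := by
  cases φ <;> simp [MuForm.subformulas]

/-- `p` is bound in `φ`: some fixpoint subformula of `φ` binds `p`. -/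
def MuForm.BoundIn (p : P) (φ : MuForm P) : Prop :=
  ∃ ψ, MuForm.mu p ψ ∈ φ.subformulas ∨ MuForm.nu p ψ ∈ φ.subformulas

/-- `φ` is in normal form: every variable is bound by at most one fixpoint
operator occurring in `φ` (the fixpoint subformula binding a given variable is
unique), and no variable occurs both free and bound in `φ`. -/
def MuForm.NormalForm (φ : MuForm P) : Prop :=
  (∀ (p : P) (χ₁ χ₂ : MuForm P), χ₁ ∈ φ.subformulas → χ₂ ∈ φ.subformulas →
      (∃ ψ, χ₁ = MuForm.mu p ψ ∨ χ₁ = MuForm.nu p ψ) →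
      (∃ ψ, χ₂ = MuForm.mu p ψ ∨ χ₂ = MuForm.nu p ψ) → χ₁ = χ₂) ∧
    ∀ p ∈ φ.freeVars, ¬ MuForm.BoundIn p φ

/-- The vertices `(ψ, s)` of the model-checking game for `φ` that belong to
Player `0`: `ψ` is `⊥`, a disjunction, a `◇`-formula, a `μ`- or `ν`-formula, a
variable bound in `φ`, a variable `p` free in `φ` with `s ∉ κ p`, or a literal
`¬p` with `s ∈ κ p`. -/
def mcPlayer0 (φ : MuForm P) (κ : P → Set S) : MuForm P × S → Prop :=
  fun v => match v.1 with
  | .bot => True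
  | .top => False
  | .var p => MuForm.BoundIn p φ ∨ (p ∈ φ.freeVars ∧ v.2 ∉ κ p)
  | .nvar p => v.2 ∈ κ p
  | .and _ _ => False
  | .or _ _ => True
  | .box _ => False
  | .dia _ => True
  | .mu _ _ => True
  | .nu _ _ => True

/-- The edges of the model-checking game for `φ`: from `(ψ₁∧ψ₂, s)` and
`(ψ₁∨ψ₂, s)` to `(ψ₁, s)` and `(ψ₂, s)`; from `(□ψ, s)` and `(◇ψ, s)` to
`(ψ, s')` for every `s'` with `R s s'`; from `(μp.ψ, s)` and `(νp.ψ, s)` to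
`(ψ, s)`; from `(p, s)` to `(φ_p, s)` where `φ_p` is the fixpoint subformula of
`φ` binding `p`; no edges from `(⊥, s)`, `(⊤, s)`, `(¬p, s)`, or `(p, s)` with
`p` free in `φ`. -/
def mcEdge (R : S → S → Prop) (φ : MuForm P) :
    MuForm P × S → MuForm P × S → Prop :=
  fun v w => match v.1 with
  | .bot => False
  | .top => False
  | .var p => w.2 = v.2 ∧ w.1 ∈ φ.subformulas ∧
      ∃ ψ, w.1 = MuForm.mu p ψ ∨ w.1 = MuForm.nu p ψ
  | .nvar _ => False
  | .and ψ₁ ψ₂ => w.2 = v.2 ∧ (w.1 = ψ₁ ∨ w.1 = ψ₂)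
  | .or ψ₁ ψ₂ => w.2 = v.2 ∧ (w.1 = ψ₁ ∨ w.1 = ψ₂)
  | .box ψ => w.1 = ψ ∧ R v.2 w.2
  | .dia ψ => w.1 = ψ ∧ R v.2 w.2
  | .mu _ ψ => w.2 = v.2 ∧ w.1 = ψ
  | .nu _ ψ => w.2 = v.2 ∧ w.1 = ψ

/-- The priority of a vertex `(ψ, s)` of the model-checking game:
`2⌈α(ψ)/2⌉ − 1` if `ψ` is a `μ`-formula with `α(ψ) > 0`, `2⌊α(ψ)/2⌋` if `ψ` is
a `ν`-formula with `α(ψ) > 0`, and `0` otherwise. -/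
noncomputable def mcPrio : MuForm P → ℕ
  | .mu p ψ => if 0 < (MuForm.mu p ψ).alt then 2 * (((MuForm.mu p ψ).alt + 1) / 2) - 1 else 0
  | .nu p ψ => if 0 < (MuForm.nu p ψ).alt then 2 * ((MuForm.nu p ψ).alt / 2) else 0
  | _ => 0

open Classical in
/-- The model-checking parity game `G(φ)` for a μ-calculus formula `φ` (in
normal form), a Kripke structure with transition relation `R`, and a valuation
`κ`: its vertices are the pairs `(ψ, s)` with `ψ` a subformula of `φ` and `s`
a state. -/
noncomputable def mcGame (R : S → S → Prop) (φ : MuForm P) (κ : P → Set S) :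
    ParityGame ({ψ : MuForm P // ψ ∈ φ.subformulas} × S) where
  owner := fun v => if mcPlayer0 φ κ (v.1.1, v.2) then 0 else 1
  E := fun v w => mcEdge R φ (v.1.1, v.2) (w.1.1, w.2)
  prio := fun v => mcPrio v.1.1
  finRange := by
    have h : (Set.range fun ψ : {ψ : MuForm P // ψ ∈ φ.subformulas} =>
        mcPrio ψ.1).Finite := Set.finite_range _
    exact h.subset (by rintro _ ⟨v, rfl⟩; exact ⟨v.1, rfl⟩)

/-!
A vertex of Player 1 is won by Player 0 iff all its successors are: a winning strategy stays
winning after the first move, and winning strategies for the successors combine into one that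
dispatches on the second vertex of the history. In `G(ψ₁∧ψ₂)` the vertex `(ψ₁∧ψ₂, s)` belongs
to Player 1 and has exactly the successors `(ψ₁, s)` and `(ψ₂, s)`.

Since `ψ₁∧ψ₂` is in normal form, a variable of `ψᵢ` is free (resp. bound) in `ψᵢ` iff it is
free (resp. bound) in `ψ₁∧ψ₂`, and its unique binder in `ψ₁∧ψ₂` lies in `ψᵢ`. So `G(ψᵢ)` embeds
into `G(ψ₁∧ψ₂)` as a subgame closed under moves, preserving owners and priorities, and plays
and strategies transfer along such an embedding in both directions.
-/

namespace List

variable {V : Type*}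

theorem getLast?_ofFn_succ (π : ℕ → V) (i : ℕ) :
    (ofFn fun j : Fin (i + 1) => π j).getLast? = some (π i) := by
  rw [getLast?_eq_getElem?, List.getElem?_ofFn]
  simp

theorem isChain_ofFn_of_forall {R : V → V → Prop} {π : ℕ → V}
    (hπ : ∀ n, R (π n) (π (n + 1))) (i : ℕ) :
    (ofFn fun j : Fin (i + 1) => π j).IsChain R := by
  rw [isChain_iff_getElem]
  intro k hk
  simpa only [List.getElem_ofFn] using hπ k

theorem getLast?_take_succ {l : List V} {i : ℕ} (h : i < l.length) :
    (l.take (i + 1)).getLast? = some l[i] := by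
  simp [getLast?_take, h]

end List

namespace ParityGame

variable {V : Type*} (G : ParityGame V)

theorem exists_validStrat [Nonempty V] : ∃ σ, G.ValidStrat σ := by
  classical
  refine ⟨fun l => if h : ∃ w, ∀ x ∈ l.getLast?, G.E x w then h.choose
    else Classical.arbitrary V, fun l x _ hx _ hnd => ?_⟩
  obtain ⟨w, hw⟩ := not_forall_not.1 hnd
  have h : ∃ w, ∀ x ∈ l.getLast?, G.E x w := ⟨w, by simp [hx, hw]⟩
  simp only [dif_pos h]
  exact h.choose_spec x hx

/-- The play condition of `WinningFrom`, without validity of `σ`: the strategy `σ (v :: ·)` left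
after a move from `v` is in general not valid. -/
def WinsPlaysFrom (σ : List V → V) (v : V) : Prop :=
  (∀ π : ℕ → V, π 0 = v → G.InfPlay π → G.ConformsInf σ π → G.WinInf π) ∧
    (∀ l : List V, G.FinPlay v l → G.ConformsFin σ l → G.WinFin l)

variable {G}

theorem winsPlaysFrom_congr {σ σ' : List V → V} {v : V}
    (h : ∀ l : List V, l.head? = some v → l.IsChain G.E → σ l = σ' l) :
    G.WinsPlaysFrom σ v ↔ G.WinsPlaysFrom σ' v := by
  have hinf : ∀ π, π 0 = v → G.InfPlay π → (G.ConformsInf σ π ↔ G.ConformsInf σ' π) := by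
    intro π hπ0 hπ
    refine forall_congr' fun i => imp_congr_right fun _ => ?_
    rw [h _ (by simp [hπ0]) (List.isChain_ofFn_of_forall hπ i)]
  have hfin : ∀ l, G.FinPlay v l → (G.ConformsFin σ l ↔ G.ConformsFin σ' l) := by
    rintro l ⟨hhead, hchain, -⟩
    refine forall_congr' fun i => forall_congr' fun hi => imp_congr_right fun _ => ?_
    rw [h _ (by cases l <;> simp_all) (hchain.take _)]
  exact and_congr
    (forall_congr' fun π => forall_congr' fun hπ0 => forall_congr' fun hπ =>
      imp_congr_left (hinf π hπ0 hπ))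
    (forall_congr' fun l => forall_congr' fun hl => imp_congr_left (hfin l hl))

theorem infPlay_cons_iff {v : V} {π : ℕ → V} :
    G.InfPlay (Stream'.cons v π) ↔ G.E v (π 0) ∧ G.InfPlay π :=
  Nat.and_forall_add_one.symm

theorem winInf_cons_iff {v : V} {π : ℕ → V} : G.WinInf (Stream'.cons v π) ↔ G.WinInf π := by
  have : G.InfOften (Stream'.cons v π) = G.InfOften π := by
    ext c
    refine ⟨fun h N => ?_, fun h N => ?_⟩
    · obtain ⟨_ | n, hn, hc⟩ := h (N + 1)
      · omega
      · exact ⟨n, by omega, hc⟩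
    · obtain ⟨n, hn, hc⟩ := h N
      exact ⟨n + 1, by omega, hc⟩
  unfold WinInf
  rw [this]

theorem conformsInf_cons_iff {σ : List V → V} {v : V} {π : ℕ → V} :
    G.ConformsInf σ (Stream'.cons v π) ↔
      (G.owner v = 0 → π 0 = σ [v]) ∧ G.ConformsInf (fun l => σ (v :: l)) π := by
  refine Nat.and_forall_add_one.symm.trans (and_congr Iff.rfl (forall_congr' fun i => ?_))
  rw [List.ofFn_succ]
  rfl

theorem finPlay_cons_cons_iff {v w : V} {l : List V} :
    G.FinPlay v (v :: w :: l) ↔ G.E v w ∧ G.FinPlay w (w :: l) := by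
  refine ⟨fun ⟨_, hc, hd⟩ => ?_, fun ⟨he, _, hc, hd⟩ => ?_⟩
  · exact ⟨(List.isChain_cons_cons.1 hc).1, rfl, (List.isChain_cons_cons.1 hc).2, hd⟩
  · exact ⟨rfl, List.isChain_cons_cons.2 ⟨he, hc⟩, hd⟩

theorem winFin_cons_cons_iff {v w : V} {l : List V} :
    G.WinFin (v :: w :: l) ↔ G.WinFin (w :: l) := by
  rw [WinFin, List.getLast?_cons_cons, WinFin]

theorem conformsFin_cons_iff {σ : List V → V} {v : V} {l : List V} :
    G.ConformsFin σ (v :: l) ↔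
      (G.owner v = 0 → ∀ w ∈ l.head?, w = σ [v]) ∧ G.ConformsFin (fun l' => σ (v :: l')) l := by
  refine Nat.and_forall_add_one.symm.trans (and_congr ?_ ?_)
  · cases l with
    | nil => exact iff_of_true (fun h => absurd h (by simp)) (fun _ _ h => by simp at h)
    | cons w l => simp
  · simp [ConformsFin]

theorem FinPlay.eq_cons {v : V} {l : List V} (h : G.FinPlay v l) : ∃ l', l = v :: l' :=
  List.head?_eq_some_iff.1 h.1

theorem winsPlaysFrom_iff_forall_of_owner_eq_one {σ : List V → V} {v : V}
    (hv : G.owner v = 1) :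
    G.WinsPlaysFrom σ v ↔ ∀ w, G.E v w → G.WinsPlaysFrom (fun l => σ (v :: l)) w := by
  have hv0 : G.owner v ≠ 0 := by rw [hv]; decide
  constructor
  · rintro ⟨hinf, hfin⟩ w hE
    refine ⟨fun ρ hρ0 hρ hconf => ?_, fun l hl hconf => ?_⟩
    · refine winInf_cons_iff.1 (hinf _ rfl (infPlay_cons_iff.2 ⟨hρ0 ▸ hE, hρ⟩) ?_)
      exact conformsInf_cons_iff.2 ⟨fun h => absurd h hv0, hconf⟩
    · obtain ⟨l, rfl⟩ := hl.eq_cons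
      refine winFin_cons_cons_iff.1 (hfin _ (finPlay_cons_cons_iff.2 ⟨hE, hl⟩) ?_)
      exact conformsFin_cons_iff.2 ⟨fun h => absurd h hv0, hconf⟩
  · intro h
    refine ⟨fun π hπ0 hπ hconf => ?_, fun l hl hconf => ?_⟩
    · obtain ⟨ρ, rfl⟩ : ∃ ρ, π = Stream'.cons v ρ :=
        ⟨Stream'.tail π, hπ0 ▸ (Stream'.eta π).symm⟩
      obtain ⟨hE, hπ⟩ := infPlay_cons_iff.1 hπ
      exact winInf_cons_iff.2 ((h _ hE).1 _ rfl hπ (conformsInf_cons_iff.1 hconf).2)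
    · obtain ⟨_ | ⟨w, l⟩, rfl⟩ := hl.eq_cons
      · simpa [WinFin] using hv
      · obtain ⟨hE, hl⟩ := finPlay_cons_cons_iff.1 hl
        exact winFin_cons_cons_iff.2 ((h w hE).2 _ hl (conformsFin_cons_iff.1 hconf).2)

def followSecond (τ : V → List V → V) (v : V) : List V → V
  | _ :: w :: l => τ w (w :: l)
  | l => τ v l

theorem Wins0.of_edge_of_owner_eq_one {v w : V} (hv : G.owner v = 1) (hE : G.E v w)
    (h : G.Wins0 v) : G.Wins0 w := by
  classical
  obtain ⟨σ, hσ, hwin⟩ := h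
  -- off the histories that continue a move from `v`, fall back on `σ` itself to stay valid
  refine ⟨fun l => if (v :: l).IsChain G.E then σ (v :: l) else σ l,
    fun l x hl hx hx0 hnd => ?_, ?_⟩
  · dsimp only
    split_ifs with h
    · exact hσ _ x h (by rw [List.getLast?_cons, hx]; rfl) hx0 hnd
    · exact hσ l x hl hx hx0 hnd
  · refine (winsPlaysFrom_congr fun l hl hc => ?_).1
      ((winsPlaysFrom_iff_forall_of_owner_eq_one hv).1 hwin w hE)
    obtain ⟨l, rfl⟩ := List.head?_eq_some_iff.1 hl
    rw [if_pos (List.isChain_cons_cons.2 ⟨hE, hc⟩)]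

theorem wins0_of_forall_edge_of_owner_eq_one {v : V} (hv : G.owner v = 1)
    (h : ∀ w, G.E v w → G.Wins0 w) : G.Wins0 v := by
  classical
  have : Nonempty V := ⟨v⟩
  have hex : ∀ w, ∃ σ, G.ValidStrat σ ∧ (G.E v w → G.WinsPlaysFrom σ w) := fun w =>
    if hE : G.E v w then (h w hE).imp fun σ hσ => ⟨hσ.1, fun _ => hσ.2⟩
    else G.exists_validStrat.imp fun σ hσ => ⟨hσ, fun h => absurd h hE⟩
  choose τ hτ using hex
  refine ⟨followSecond τ v, ?_, ?_⟩
  · rintro (_ | ⟨u, _ | ⟨w, l⟩⟩) x hl hx hx0 hnd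
    · cases hx
    · exact (hτ v).1 _ x hl hx hx0 hnd
    · exact (hτ w).1 _ x hl.tail hx hx0 hnd
  · refine (winsPlaysFrom_iff_forall_of_owner_eq_one hv).2 fun w hE =>
      (winsPlaysFrom_congr fun l hl _ => ?_).2 ((hτ w).2 hE)
    obtain ⟨l, rfl⟩ := List.head?_eq_some_iff.1 hl
    rfl

theorem wins0_iff_forall_of_owner_eq_one {v : V} (hv : G.owner v = 1) :
    G.Wins0 v ↔ ∀ w, G.E v w → G.Wins0 w :=
  ⟨fun h _ hE => h.of_edge_of_owner_eq_one hv hE, wins0_of_forall_edge_of_owner_eq_one hv⟩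

variable {W : Type*}

structure IsSubgameEmbedding (H : ParityGame W) (G : ParityGame V) (f : W → V) : Prop where
  injective : Function.Injective f
  owner_apply : ∀ w, G.owner (f w) = H.owner w
  prio_apply : ∀ w, G.prio (f w) = H.prio w
  edge_iff : ∀ w w', G.E (f w) (f w') ↔ H.E w w'
  mem_range_of_edge : ∀ w v, G.E (f w) v → v ∈ Set.range f

def AgreeAlong (H : ParityGame W) (f : W → V) (σ : List W → W) (τ : List V → V) : Prop :=
  ∀ l x, l.IsChain H.E → l.getLast? = some x → H.owner x = 0 → ¬ H.DeadEnd x →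
    f (σ l) = τ (l.map f)

namespace IsSubgameEmbedding

variable {H : ParityGame W} {G : ParityGame V} {f : W → V} (hf : IsSubgameEmbedding H G f)
include hf

theorem deadEnd_iff (w : W) : G.DeadEnd (f w) ↔ H.DeadEnd w := by
  refine ⟨fun h w' hw' => h _ ((hf.edge_iff w w').2 hw'), fun h v hv => ?_⟩
  obtain ⟨w', rfl⟩ := hf.mem_range_of_edge w v hv
  exact h w' ((hf.edge_iff w w').1 hv)

theorem isChain_map_iff (l : List W) : (l.map f).IsChain G.E ↔ l.IsChain H.E := by
  rw [List.isChain_map]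
  exact ⟨fun h => h.imp fun a b => (hf.edge_iff a b).1,
    fun h => h.imp fun a b => (hf.edge_iff a b).2⟩

theorem exists_map_eq_of_isChain :
    ∀ l : List V, l.IsChain G.E → (∀ x ∈ l.head?, x ∈ Set.range f) →
      ∃ l' : List W, l = l'.map f
  | [], _, _ => ⟨[], rfl⟩
  | [x], _, hx => by
    obtain ⟨w, rfl⟩ := hx x rfl
    exact ⟨[w], rfl⟩
  | x :: y :: l, hl, hx => by
    obtain ⟨w, rfl⟩ := hx x rfl
    obtain ⟨hE, hl⟩ := List.isChain_cons_cons.1 hl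
    obtain ⟨l', hl'⟩ := exists_map_eq_of_isChain (y :: l) hl fun z hz =>
      Option.some_inj.1 hz ▸ hf.mem_range_of_edge w y hE
    exact ⟨w :: l', by rw [hl', List.map_cons]⟩

theorem exists_comp_eq_of_infPlay {π : ℕ → V} (hπ : G.InfPlay π) (h0 : π 0 ∈ Set.range f) :
    ∃ ρ : ℕ → W, π = f ∘ ρ := by
  have h : ∀ n, π n ∈ Set.range f := by
    intro n
    induction n with
    | zero => exact h0
    | succ n ih =>
      obtain ⟨w, hw⟩ := ih
      exact hf.mem_range_of_edge w _ (hw ▸ hπ n)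
  choose ρ hρ using h
  exact ⟨ρ, funext fun n => (hρ n).symm⟩

theorem infPlay_comp_iff (ρ : ℕ → W) : G.InfPlay (f ∘ ρ) ↔ H.InfPlay ρ :=
  forall_congr' fun _ => hf.edge_iff _ _

theorem winInf_comp_iff (ρ : ℕ → W) : G.WinInf (f ∘ ρ) ↔ H.WinInf ρ := by
  simp only [WinInf, InfOften, Function.comp_apply, hf.prio_apply]

theorem finPlay_map_iff (w : W) (l : List W) : G.FinPlay (f w) (l.map f) ↔ H.FinPlay w l := by
  refine and_congr ?_ (and_congr (hf.isChain_map_iff l) ?_)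
  · rw [List.head?_map]
    exact (Option.map_injective hf.injective).eq_iff' rfl
  · simp [List.getLast?_map, hf.deadEnd_iff]

theorem winFin_map_iff (l : List W) : G.WinFin (l.map f) ↔ H.WinFin l := by
  simp [WinFin, List.getLast?_map, hf.owner_apply]

variable {σ : List W → W} {τ : List V → V}

theorem conformsInf_comp_iff (hστ : AgreeAlong H f σ τ) {ρ : ℕ → W} (hρ : H.InfPlay ρ) :
    G.ConformsInf τ (f ∘ ρ) ↔ H.ConformsInf σ ρ := by
  refine forall_congr' fun i => ?_
  rw [Function.comp_apply, hf.owner_apply]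
  refine imp_congr_right fun h0 => ?_
  have hτ := hστ _ (ρ i) (List.isChain_ofFn_of_forall hρ i) (List.getLast?_ofFn_succ ρ i) h0
    fun h => h _ (hρ i)
  rw [List.map_ofFn] at hτ
  rw [Function.comp_apply, ← hf.injective.eq_iff, hτ]
  rfl

theorem conformsFin_map_iff (hστ : AgreeAlong H f σ τ) {l : List W} (hl : l.IsChain H.E) :
    G.ConformsFin τ (l.map f) ↔ H.ConformsFin σ l := by
  simp only [ConformsFin, List.length_map, List.get_eq_getElem, List.getElem_map,
    hf.owner_apply, ← List.map_take]
  refine forall_congr' fun i => forall_congr' fun hi => imp_congr_right fun h0 => ?_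
  have hτ := hστ _ l[i] (hl.take _) (List.getLast?_take_succ (by omega)) h0
    fun h => h _ (List.isChain_iff_getElem.1 hl i hi)
  rw [← hτ, hf.injective.eq_iff]

theorem winsPlaysFrom_iff (hστ : AgreeAlong H f σ τ) (w : W) :
    G.WinsPlaysFrom τ (f w) ↔ H.WinsPlaysFrom σ w := by
  refine and_congr ⟨fun h ρ hρ0 hρ hconf => ?_, fun h π hπ0 hπ hconf => ?_⟩
    ⟨fun h l hl hconf => ?_, fun h l hl hconf => ?_⟩
  · exact (hf.winInf_comp_iff ρ).1 (h _ (by simp [hρ0]) ((hf.infPlay_comp_iff ρ).2 hρ)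
      ((hf.conformsInf_comp_iff hστ hρ).2 hconf))
  · obtain ⟨ρ, rfl⟩ := hf.exists_comp_eq_of_infPlay hπ ⟨w, hπ0.symm⟩
    have hρ := (hf.infPlay_comp_iff ρ).1 hπ
    exact (hf.winInf_comp_iff ρ).2
      (h ρ (hf.injective hπ0) hρ ((hf.conformsInf_comp_iff hστ hρ).1 hconf))
  · exact (hf.winFin_map_iff l).1
      (h _ ((hf.finPlay_map_iff w l).2 hl) ((hf.conformsFin_map_iff hστ hl.2.1).2 hconf))
  · obtain ⟨l, rfl⟩ := hf.exists_map_eq_of_isChain l hl.2.1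
      fun x hx => ⟨w, Option.some_inj.1 (hl.1.symm.trans hx)⟩
    have hl := (hf.finPlay_map_iff w l).1 hl
    exact (hf.winFin_map_iff l).2 (h l hl ((hf.conformsFin_map_iff hστ hl.2.1).1 hconf))

theorem exists_pullback_validStrat [Nonempty W] (hτ : G.ValidStrat τ) :
    ∃ σ, H.ValidStrat σ ∧ AgreeAlong H f σ τ := by
  have hmove : ∀ (l : List W) x, l.IsChain H.E → l.getLast? = some x → H.owner x = 0 →
      ¬ H.DeadEnd x → G.E (f x) (τ (l.map f)) := fun l x hl hx h0 hnd =>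
    hτ _ _ ((hf.isChain_map_iff l).2 hl) (by simp [List.getLast?_map, hx])
      (by rw [hf.owner_apply]; exact h0) (by rwa [hf.deadEnd_iff])
  refine ⟨fun l => Function.invFun f (τ (l.map f)), fun l x hl hx h0 hnd => ?_,
    fun l x hl hx h0 hnd => ?_⟩
  · rw [← hf.edge_iff, Function.invFun_eq (hf.mem_range_of_edge x _ (hmove l x hl hx h0 hnd))]
    exact hmove l x hl hx h0 hnd
  · exact Function.invFun_eq (hf.mem_range_of_edge x _ (hmove l x hl hx h0 hnd))

theorem exists_pushforward_validStrat [Nonempty V] (hσ : H.ValidStrat σ) :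
    ∃ τ, G.ValidStrat τ ∧ AgreeAlong H f σ τ := by
  classical
  obtain ⟨τ₀, hτ₀⟩ := G.exists_validStrat
  refine ⟨fun l => if h : ∃ l' : List W, l = l'.map f then f (σ h.choose) else τ₀ l,
    fun l x hl hx h0 hnd => ?_, fun l _ _ _ _ _ => ?_⟩
  · dsimp only
    split_ifs with h
    · have hl' := h.choose_spec
      rw [hl'] at hl hx
      obtain ⟨x', hx', rfl⟩ := Option.map_eq_some_iff.1 (List.getLast?_map.symm.trans hx)
      rw [hf.owner_apply] at h0
      rw [hf.deadEnd_iff] at hnd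
      exact (hf.edge_iff _ _).2 (hσ _ x' ((hf.isChain_map_iff _).1 hl) hx' h0 hnd)
    · exact hτ₀ l x hl hx h0 hnd
  · have h : ∃ l' : List W, l.map f = l'.map f := ⟨l, rfl⟩
    simp only [dif_pos h, List.map_injective_iff.2 hf.injective h.choose_spec.symm]

theorem wins0_iff (w : W) : G.Wins0 (f w) ↔ H.Wins0 w := by
  have : Nonempty V := ⟨f w⟩
  have : Nonempty W := ⟨w⟩
  constructor
  · rintro ⟨τ, hτ, hwin⟩
    obtain ⟨σ, hσ, hστ⟩ := hf.exists_pullback_validStrat hτ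
    exact ⟨σ, hσ, (hf.winsPlaysFrom_iff hστ w).1 hwin⟩
  · rintro ⟨σ, hσ, hwin⟩
    obtain ⟨τ, hτ, hστ⟩ := hf.exists_pushforward_validStrat hσ
    exact ⟨τ, hτ, (hf.winsPlaysFrom_iff hστ w).2 hwin⟩

end IsSubgameEmbedding

end ParityGame

namespace MuForm

theorem subformulas_subset_of_mem {φ ψ : MuForm P} (h : ψ ∈ φ.subformulas) :
    ψ.subformulas ⊆ φ.subformulas := by
  induction φ with
  | and _ _ ih₁ ih₂ | or _ _ ih₁ ih₂ =>
    simp only [subformulas, Finset.mem_insert, Finset.mem_union] at h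
    rcases h with rfl | h | h
    · rfl
    · exact (ih₁ h).trans (Finset.subset_union_left.trans (Finset.subset_insert _ _))
    · exact (ih₂ h).trans (Finset.subset_union_right.trans (Finset.subset_insert _ _))
  | box _ ih | dia _ ih | mu _ _ ih | nu _ _ ih =>
    simp only [subformulas, Finset.mem_insert] at h
    rcases h with rfl | h
    · rfl
    · exact (ih h).trans (Finset.subset_insert _ _)
  | _ => simp only [subformulas, Finset.mem_singleton] at h; rw [h]

theorem BoundIn.mono {p : P} {φ ψ : MuForm P} (h : ψ.BoundIn p)
    (hsub : ψ.subformulas ⊆ φ.subformulas) : φ.BoundIn p :=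
  h.imp fun _ => Or.imp (@hsub _) (@hsub _)

theorem mem_freeVars_or_boundIn {φ : MuForm P} {p : P} (h : var p ∈ φ.subformulas) :
    p ∈ φ.freeVars ∨ φ.BoundIn p := by
  induction φ with
  | var q => simp_all [subformulas, freeVars]
  | and φ₁ φ₂ ih₁ ih₂ | or φ₁ φ₂ ih₁ ih₂ =>
    simp only [subformulas, Finset.mem_insert, reduceCtorEq, false_or, Finset.mem_union] at h
    rcases h with h | h
    · exact (ih₁ h).imp (Or.inl ·)
        (·.mono (Finset.subset_union_left.trans (Finset.subset_insert _ _)))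
    · exact (ih₂ h).imp (Or.inr ·)
        (·.mono (Finset.subset_union_right.trans (Finset.subset_insert _ _)))
  | box _ ih | dia _ ih =>
    simp only [subformulas, Finset.mem_insert, reduceCtorEq, false_or] at h
    exact (ih h).imp id (·.mono (Finset.subset_insert _ _))
  | mu q φ ih | nu q φ ih =>
    simp only [subformulas, Finset.mem_insert, reduceCtorEq, false_or] at h
    by_cases hpq : p = q
    · subst hpq
      exact Or.inr ⟨φ, by simp [subformulas]⟩
    · exact (ih h).imp (fun hp => ⟨hp, hpq⟩) (·.mono (Finset.subset_insert _ _))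
  | _ => simp [subformulas] at h

theorem mem_subformulas_of_mcEdge {R : S → S → Prop} {φ χ χ' : MuForm P} {s s' : S}
    (hχ : ∀ p, χ ≠ var p) (he : mcEdge R φ (χ, s) (χ', s')) : χ' ∈ χ.subformulas := by
  cases χ with
  | var p => exact absurd rfl (hχ p)
  | and a b | or a b =>
    obtain ⟨-, rfl | rfl⟩ := he <;> simp [subformulas, self_mem_subformulas]
  | box a | dia a => obtain ⟨rfl, -⟩ := he; simp [subformulas, self_mem_subformulas]
  | mu q a | nu q a => obtain ⟨-, rfl⟩ := he; simp [subformulas, self_mem_subformulas]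
  | bot | top | nvar _ => exact he.elim

namespace NormalForm

variable {φ ψ : MuForm P} (hnf : φ.NormalForm) (hsub : ψ.subformulas ⊆ φ.subformulas)
  (hfree : ψ.freeVars ⊆ φ.freeVars)
include hnf hsub hfree

theorem boundIn_iff {p : P} (hp : var p ∈ ψ.subformulas) : φ.BoundIn p ↔ ψ.BoundIn p :=
  ⟨fun hb => (mem_freeVars_or_boundIn hp).resolve_left fun hf => hnf.2 p (hfree hf) hb,
    (·.mono hsub)⟩

theorem mem_freeVars_iff {p : P} (hp : var p ∈ ψ.subformulas) :
    p ∈ φ.freeVars ↔ p ∈ ψ.freeVars :=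
  ⟨fun hf => (mem_freeVars_or_boundIn hp).resolve_right fun hb => hnf.2 p hf (hb.mono hsub),
    (hfree ·)⟩

theorem mcPlayer0_iff (κ : P → Set S) {χ : MuForm P} (hχ : χ ∈ ψ.subformulas) (t : S) :
    mcPlayer0 φ κ (χ, t) ↔ mcPlayer0 ψ κ (χ, t) := by
  cases χ with
  | var p =>
    exact or_congr (hnf.boundIn_iff hsub hfree hχ)
      (and_congr_left' (hnf.mem_freeVars_iff hsub hfree hχ))
  | _ => rfl

/-- The edge from a variable leads to its unique binder in `φ`, which already lies in `ψ`. -/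
theorem mem_subformulas_of_mcEdge_of_mem {R : S → S → Prop} {χ χ' : MuForm P} {s s' : S}
    (hχ : χ ∈ ψ.subformulas) (he : mcEdge R φ (χ, s) (χ', s')) : χ' ∈ ψ.subformulas := by
  by_cases hvar : ∃ p, χ = var p
  · obtain ⟨p, rfl⟩ := hvar
    obtain ⟨-, hχ'φ, δ, hδ⟩ := he
    have hbound : φ.BoundIn p :=
      ⟨δ, hδ.imp (fun (h : χ' = mu p δ) => h ▸ hχ'φ) (fun (h : χ' = nu p δ) => h ▸ hχ'φ)⟩
    obtain ⟨δ', hδ'⟩ := (hnf.boundIn_iff hsub hfree hχ).1 hbound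
    rcases hδ' with h | h
    · rwa [hnf.1 p χ' _ hχ'φ (hsub h) ⟨δ, hδ⟩ ⟨δ', Or.inl rfl⟩]
    · rwa [hnf.1 p χ' _ hχ'φ (hsub h) ⟨δ, hδ⟩ ⟨δ', Or.inr rfl⟩]
  · push Not at hvar
    exact subformulas_subset_of_mem hχ (MuForm.mem_subformulas_of_mcEdge hvar he)

end NormalForm

end MuForm

theorem mcEdge_iff_of_subformulas_subset (R : S → S → Prop) {φ ψ χ' : MuForm P}
    (hsub : ψ.subformulas ⊆ φ.subformulas) (hχ' : χ' ∈ ψ.subformulas) (v : MuForm P × S)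
    (t : S) :
    mcEdge R φ v (χ', t) ↔ mcEdge R ψ v (χ', t) := by
  obtain ⟨χ, s⟩ := v
  cases χ <;> simp [mcEdge, hχ', hsub hχ']

theorem mcGame_isSubgameEmbedding (R : S → S → Prop) (κ : P → Set S) {φ ψ : MuForm P}
    (hnf : φ.NormalForm) (hsub : ψ.subformulas ⊆ φ.subformulas)
    (hfree : ψ.freeVars ⊆ φ.freeVars) :
    (mcGame R ψ κ).IsSubgameEmbedding (mcGame R φ κ) fun v => (⟨v.1.1, hsub v.1.2⟩, v.2) where
  injective := by
    rintro ⟨⟨χ, _⟩, s⟩ ⟨⟨χ', _⟩, s'⟩ h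
    simp_all
  owner_apply := fun ⟨⟨χ, hχ⟩, t⟩ => by
    classical
    exact if_congr (hnf.mcPlayer0_iff hsub hfree κ hχ t) rfl rfl
  prio_apply _ := rfl
  edge_iff := fun _ ⟨⟨_, hχ'⟩, t'⟩ => mcEdge_iff_of_subformulas_subset R hsub hχ' _ t'
  mem_range_of_edge := fun ⟨⟨χ, hχ⟩, t⟩ ⟨⟨χ', _⟩, t'⟩ he =>
    ⟨(⟨χ', hnf.mem_subformulas_of_mcEdge_of_mem hsub hfree hχ he⟩, t'), rfl⟩

/-- Player `0` wins the model-checking game `G(ψ₁∧ψ₂)` from `(ψ₁∧ψ₂, s)` iff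
Player `0` wins `G(ψ₁)` from `(ψ₁, s)` and Player `0` wins `G(ψ₂)` from
`(ψ₂, s)`. -/
theorem mcGame_and_wins_iff (R : S → S → Prop) (ψ₁ ψ₂ : MuForm P)
    (hnf : (MuForm.and ψ₁ ψ₂).NormalForm) (κ : P → Set S) (s : S) :
    (mcGame R (MuForm.and ψ₁ ψ₂) κ).Wins0
        (⟨MuForm.and ψ₁ ψ₂, (MuForm.and ψ₁ ψ₂).self_mem_subformulas⟩, s) ↔
      (mcGame R ψ₁ κ).Wins0 (⟨ψ₁, ψ₁.self_mem_subformulas⟩, s) ∧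
        (mcGame R ψ₂ κ).Wins0 (⟨ψ₂, ψ₂.self_mem_subformulas⟩, s) := by
  have hsub₁ : ψ₁.subformulas ⊆ (MuForm.and ψ₁ ψ₂).subformulas :=
    Finset.subset_union_left.trans (Finset.subset_insert _ _)
  have hsub₂ : ψ₂.subformulas ⊆ (MuForm.and ψ₁ ψ₂).subformulas :=
    Finset.subset_union_right.trans (Finset.subset_insert _ _)
  rw [← (mcGame_isSubgameEmbedding R κ hnf hsub₁ Set.subset_union_left).wins0_iff,
    ← (mcGame_isSubgameEmbedding R κ hnf hsub₂ Set.subset_union_right).wins0_iff,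
    ParityGame.wins0_iff_forall_of_owner_eq_one (if_neg id)]
  refine ⟨fun h => ⟨h _ ⟨rfl, Or.inl rfl⟩, h _ ⟨rfl, Or.inr rfl⟩⟩, ?_⟩
  rintro ⟨h₁, h₂⟩ ⟨⟨χ, _⟩, t⟩ (⟨rfl, rfl | rfl⟩ : t = s ∧ (χ = ψ₁ ∨ χ = ψ₂))
  exacts [h₁, h₂]
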